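/- Drift-squared bias of the projected quadratic variation: if the squared diffusion lies in the library span, σ(x)² = Σ_{k=1}^{K} d_k·f_k(x) for all x, then for every N ∈ ℕ and every kernel index j, E[Q_j] = Σ_{k=1}^{K} d_k·E[A_{jk}] + Δt²·Σ_{n=0}^{N−1} E[K_j(X_n)·b(X_n)²], where A_{jk} := Δt·Σ_{n=0}^{N−1} K_j(X_n)·f_k(X_n) and Q_j := Σ_{n=0}^{N−1} K_j(X_n)·(ΔX_n)². -/

import Mathlib

open MeasureTheory ProbabilityTheory Filter

section AuxGaussianMoments
open Real
open scoped NNReal ENNReal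
open scoped NNReal ENNReal

lemma int_mul_exp_zero : ∫ x : ℝ, x * Real.exp (-(2⁻¹ : ℝ) * x ^ 2) = 0 := by
  have hderiv : ∀ x : ℝ, HasDerivAt (fun x : ℝ => -Real.exp (-(2⁻¹:ℝ) * x ^ 2))
      (x * Real.exp (-(2⁻¹:ℝ) * x ^ 2)) x := by
    intro x
    have h1 : HasDerivAt (fun x : ℝ => -(2⁻¹:ℝ) * x ^ 2) (-(2⁻¹:ℝ) * (2 * x)) x := by
      simpa using ((hasDerivAt_pow 2 x).const_mul (-(2⁻¹:ℝ)))
    have : HasDerivAt (fun x : ℝ => -Real.exp (-(2⁻¹:ℝ) * x ^ 2)) _ x := (h1.exp).neg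
    convert this using 1
    ring
  exact integral_eq_zero_of_hasDerivAt_of_integrable hderiv
    (integrable_mul_exp_neg_mul_sq (by norm_num : (0:ℝ) < 2⁻¹))
    ((integrable_exp_neg_mul_sq (by norm_num : (0:ℝ) < 2⁻¹)).neg)

lemma integrable_sq_mul_exp : Integrable fun x : ℝ => x ^ 2 * Real.exp (-(2⁻¹:ℝ) * x ^ 2) := by
  have := integrable_rpow_mul_exp_neg_mul_sq (by norm_num : (0:ℝ) < 2⁻¹) (s := 2) (by norm_num)
  simpa [Real.rpow_natCast] using this

lemma int_sq_mul_exp : ∫ x : ℝ, x ^ 2 * Real.exp (-(2⁻¹:ℝ) * x ^ 2) = Real.sqrt (2 * π) := by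
  have hderiv : ∀ x : ℝ, HasDerivAt (fun x : ℝ => -x * Real.exp (-(2⁻¹:ℝ) * x ^ 2))
      (x ^ 2 * Real.exp (-(2⁻¹:ℝ) * x ^ 2) - Real.exp (-(2⁻¹:ℝ) * x ^ 2)) x := by
    intro x
    have h1 : HasDerivAt (fun x : ℝ => -(2⁻¹:ℝ) * x ^ 2) (-(2⁻¹:ℝ) * (2 * x)) x := by
      simpa using ((hasDerivAt_pow 2 x).const_mul (-(2⁻¹:ℝ)))
    have h2 : HasDerivAt (fun x : ℝ => -x * Real.exp (-(2⁻¹:ℝ) * x ^ 2)) _ x := (hasDerivAt_neg x).mul h1.exp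
    convert h2 using 1
    ring
  have hzero := integral_eq_zero_of_hasDerivAt_of_integrable hderiv
    (integrable_sq_mul_exp.sub (integrable_exp_neg_mul_sq (by norm_num : (0:ℝ) < 2⁻¹)))
    (((integrable_mul_exp_neg_mul_sq (by norm_num : (0:ℝ) < 2⁻¹)).neg).congr (Filter.Eventually.of_forall fun x => by simp [neg_mul]))
  have hsplit := integral_sub integrable_sq_mul_exp
    (integrable_exp_neg_mul_sq (by norm_num : (0:ℝ) < 2⁻¹))
  have hg : ∫ x : ℝ, Real.exp (-(2⁻¹:ℝ) * x ^ 2) = Real.sqrt (2 * π) := by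
    rw [integral_gaussian]
    norm_num [Real.sqrt_eq_iff_eq_sq]
    ring_nf
  have : (∫ x : ℝ, x ^ 2 * Real.exp (-(2⁻¹:ℝ) * x ^ 2)) - ∫ x : ℝ, Real.exp (-(2⁻¹:ℝ) * x ^ 2) = 0 := by
    rw [← hsplit]; exact hzero
  linarith [hg, this]

lemma integral_gaussianReal_std (g : ℝ → ℝ) (hg : Measurable g) :
    ∫ x, g x ∂(gaussianReal 0 1) =
      ∫ x, gaussianPDFReal 0 1 x * g x := by
  rw [gaussianReal_of_var_ne_zero 0 one_ne_zero]
  have : (gaussianPDF 0 1) = fun x => ((Real.toNNReal (gaussianPDFReal 0 1 x) : ℝ≥0) : ℝ≥0∞) := by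
    ext x; simp [gaussianPDF, ENNReal.ofReal]
  rw [this, integral_withDensity_eq_integral_smul
    ((measurable_gaussianPDFReal 0 1).real_toNNReal) g]
  congr 1
  ext x
  simp [NNReal.smul_def, Real.coe_toNNReal _ (gaussianPDFReal_nonneg 0 1 x)]

lemma gaussianPDFReal_std (x : ℝ) :
    gaussianPDFReal 0 1 x = (Real.sqrt (2 * Real.pi))⁻¹ * Real.exp (-(2⁻¹:ℝ) * x ^ 2) := by
  rw [gaussianPDFReal]
  norm_num
  ring_nf
  exact Or.inl trivial

lemma integral_gaussianReal_std' (g : ℝ → ℝ) (hg : Measurable g) :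
    ∫ x, g x ∂(gaussianReal 0 1) =
      (Real.sqrt (2 * Real.pi))⁻¹ * ∫ x, g x * Real.exp (-(2⁻¹:ℝ) * x ^ 2) := by
  rw [integral_gaussianReal_std g hg, ← MeasureTheory.integral_const_mul]
  congr 1
  ext x
  rw [gaussianPDFReal_std]
  ring

lemma integral_id_gaussianReal_std : ∫ x, x ∂(gaussianReal 0 1) = 0 := by
  rw [integral_gaussianReal_std' (fun x => x) measurable_id, int_mul_exp_zero, mul_zero]

lemma integral_sq_gaussianReal_std : ∫ x, x ^ 2 ∂(gaussianReal 0 1) = 1 := by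
  rw [integral_gaussianReal_std' (fun x => x ^ 2) (by fun_prop), int_sq_mul_exp,
    inv_mul_cancel₀]
  positivity

lemma integrable_gauss_std (g : ℝ → ℝ) (hg : Measurable g)
    (hint : Integrable (fun x => g x * Real.exp (-(2⁻¹:ℝ) * x ^ 2))) :
    Integrable g (gaussianReal 0 1) := by
  rw [gaussianReal_of_var_ne_zero 0 one_ne_zero]
  have hpdf : (gaussianPDF 0 1) = fun x => ((Real.toNNReal (gaussianPDFReal 0 1 x) : ℝ≥0) : ℝ≥0∞) := by
    ext x; simp [gaussianPDF, ENNReal.ofReal]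
  rw [hpdf, integrable_withDensity_iff_integrable_smul
    ((measurable_gaussianPDFReal 0 1).real_toNNReal)]
  have : (fun x => (Real.toNNReal (gaussianPDFReal 0 1 x)) • g x)
      = fun x => (Real.sqrt (2 * Real.pi))⁻¹ * (g x * Real.exp (-(2⁻¹:ℝ) * x ^ 2)) := by
    ext x
    rw [NNReal.smul_def, Real.coe_toNNReal _ (gaussianPDFReal_nonneg 0 1 x), gaussianPDFReal_std,
      smul_eq_mul]
    ring
  rw [this]
  exact hint.const_mul _

lemma integrable_id_gauss : Integrable (fun x : ℝ => x) (gaussianReal 0 1) :=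
  integrable_gauss_std _ measurable_id
    (integrable_mul_exp_neg_mul_sq (by norm_num : (0:ℝ) < 2⁻¹))

lemma integrable_sq_gauss : Integrable (fun x : ℝ => x ^ 2) (gaussianReal 0 1) :=
  integrable_gauss_std _ (by fun_prop) integrable_sq_mul_exp

lemma integrable_bdd_comp {Ω : Type*} [MeasurableSpace Ω] (P : Measure Ω) [IsProbabilityMeasure P]
    {g : Ω → ℝ} (hm : Measurable g) {C : ℝ} (h : ∀ ω, |g ω| ≤ C) : Integrable g P := by
  refine (integrable_const C).mono' hm.aestronglyMeasurable ?_
  filter_upwards with ω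
  simpa [Real.norm_eq_abs] using h ω

end AuxGaussianMoments

/-- Drift-squared bias of the projected quadratic variation: if
`σ² = Σ_k d_k f_k`, then
`E[Q_j] = Σ_k d_k E[A_{jk}] + Δt² Σ_{n<N} E[K_j(X_n) b(X_n)²]`. -/
theorem projected_quadratic_variation_bias
    {Ω : Type*} [mΩ : MeasurableSpace Ω] (P : Measure Ω) [IsProbabilityMeasure P]
    (ℱ : Filtration ℕ mΩ)
    (Δt : ℝ) (hΔt : 0 < Δt)
    (b σ : ℝ → ℝ) (hb_meas : Measurable b) (hσ_meas : Measurable σ)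
    (hb_bdd : ∃ C, ∀ x, |b x| ≤ C) (hσ_bdd : ∃ C, ∀ x, |σ x| ≤ C)
    (X : ℕ → Ω → ℝ) (hX_adapted : Adapted ℱ X)
    (ξ : ℕ → Ω → ℝ) (hξ_meas : ∀ n, Measurable (ξ n))
    (hξ_law : ∀ n, Measure.map (ξ n) P = gaussianReal 0 1)
    (hξ_adapted : ∀ n, Measurable[ℱ (n + 1)] (ξ n))
    (hξ_indep : ∀ n, Indep (MeasurableSpace.comap (ξ n) inferInstance) (ℱ n) P)
    (ΔX : ℕ → Ω → ℝ)
    (hΔX : ∀ n ω, ΔX n ω = b (X n ω) * Δt + σ (X n ω) * Real.sqrt Δt * ξ n ω)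
    (hX_rec : ∀ n ω, X (n + 1) ω = X n ω + ΔX n ω)
    {M K : ℕ} (Kf : Fin M → ℝ → ℝ) (f : Fin K → ℝ → ℝ)
    (hKf_meas : ∀ j, Measurable (Kf j)) (hKf_bdd : ∀ j, ∃ C, ∀ x, |Kf j x| ≤ C)
    (hf_meas : ∀ k, Measurable (f k)) (hf_bdd : ∀ k, ∃ C, ∀ x, |f k x| ≤ C)
    (d : Fin K → ℝ)
    (hlib : ∀ x, σ x ^ 2 = ∑ k, d k * f k x)
    (N : ℕ) (j : Fin M) :
    ∫ ω, (∑ n ∈ Finset.range N, Kf j (X n ω) * (ΔX n ω) ^ 2) ∂P =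
      (∑ k, d k * ∫ ω, (Δt * ∑ n ∈ Finset.range N, Kf j (X n ω) * f k (X n ω)) ∂P)
      + Δt ^ 2 * ∑ n ∈ Finset.range N, ∫ ω, Kf j (X n ω) * b (X n ω) ^ 2 ∂P := by
  obtain ⟨Cb, hCb⟩ := hb_bdd
  obtain ⟨Cσ, hCσ⟩ := hσ_bdd
  obtain ⟨CK, hCK⟩ := hKf_bdd j
  have hXm : ∀ n, Measurable (X n) := fun n => (hX_adapted n).mono (ℱ.le n) le_rfl
  -- ξ moments and integrability
  have hξ_int : ∀ n, Integrable (ξ n) P := by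
    intro n
    have h : Integrable (fun x : ℝ => x) (Measure.map (ξ n) P) := by
      rw [hξ_law n]; exact integrable_id_gauss
    exact (integrable_map_measure aestronglyMeasurable_id (hξ_meas n).aemeasurable).mp h
  have hξ_sq_int : ∀ n, Integrable (fun ω => (ξ n ω) ^ 2) P := by
    intro n
    have h : Integrable (fun x : ℝ => x ^ 2) (Measure.map (ξ n) P) := by
      rw [hξ_law n]; exact integrable_sq_gauss
    exact (integrable_map_measure (by fun_prop) (hξ_meas n).aemeasurable).mp h
  have hξ_mean : ∀ n, ∫ ω, ξ n ω ∂P = 0 := by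
    intro n
    have h := integral_map (hξ_meas n).aemeasurable
      (aestronglyMeasurable_id (μ := Measure.map (ξ n) P) (α := ℝ))
    rw [hξ_law n] at h
    simpa [integral_id_gaussianReal_std] using h.symm
  have hξ_sq_mean : ∀ n, ∫ ω, (ξ n ω) ^ 2 ∂P = 1 := by
    intro n
    have h := integral_map (hξ_meas n).aemeasurable
      (by fun_prop : AEStronglyMeasurable (fun x : ℝ => x ^ 2) (Measure.map (ξ n) P))
    rw [hξ_law n] at h
    simpa [integral_sq_gaussianReal_std] using h.symm
  -- independence
  have hIF : ∀ n, IndepFun (X n) (ξ n) P := fun n =>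
    (indep_of_indep_of_le_right (hξ_indep n) ((hX_adapted n).comap_le)).symm
  have hmul : ∀ (n : ℕ) (g : ℝ → ℝ) (C : ℝ), Measurable g → (∀ x, |g x| ≤ C) →
      ∀ (φ : ℝ → ℝ), Measurable φ → Integrable (fun ω => φ (ξ n ω)) P →
      ∫ ω, g (X n ω) * φ (ξ n ω) ∂P =
        (∫ ω, g (X n ω) ∂P) * ∫ ω, φ (ξ n ω) ∂P := by
    intro n g C hg hgb φ hφ hφint
    have hind : IndepFun (fun ω => g (X n ω)) (fun ω => φ (ξ n ω)) P :=
      (hIF n).comp hg hφ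
    have hgint : Integrable (fun ω => g (X n ω)) P :=
      integrable_bdd_comp P (hg.comp (hXm n)) (fun ω => hgb (X n ω))
    exact hind.integral_mul_eq_mul_integral hgint.aestronglyMeasurable hφint.aestronglyMeasurable
  -- bounds for library products
  have hg1b : ∀ x, |Kf j x * b x ^ 2| ≤ CK * Cb ^ 2 := by
    intro x
    rw [abs_mul, abs_pow]
    exact mul_le_mul (hCK x) (pow_le_pow_left₀ (abs_nonneg _) (hCb x) 2)
      (by positivity) ((abs_nonneg _).trans (hCK x))
  have hg2b : ∀ x, |Kf j x * (b x * σ x)| ≤ CK * (Cb * Cσ) := by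
    intro x
    rw [abs_mul, abs_mul]
    exact mul_le_mul (hCK x)
      (mul_le_mul (hCb x) (hCσ x) (abs_nonneg _) ((abs_nonneg _).trans (hCb x)))
      (by positivity) ((abs_nonneg _).trans (hCK x))
  have hg3b : ∀ x, |Kf j x * σ x ^ 2| ≤ CK * Cσ ^ 2 := by
    intro x
    rw [abs_mul, abs_pow]
    exact mul_le_mul (hCK x) (pow_le_pow_left₀ (abs_nonneg _) (hCσ x) 2)
      (by positivity) ((abs_nonneg _).trans (hCK x))
  have hgkb : ∀ k x, |Kf j x * f k x| ≤ CK * (hf_bdd k).choose := by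
    intro k x
    rw [abs_mul]
    exact mul_le_mul (hCK x) ((hf_bdd k).choose_spec x) (abs_nonneg _)
      ((abs_nonneg _).trans (hCK x))
  -- integrability of library products composed with X n
  have Ig1 : ∀ n, Integrable (fun ω => Kf j (X n ω) * b (X n ω) ^ 2) P := fun n =>
    integrable_bdd_comp P (((hKf_meas j).comp (hXm n)).mul ((hb_meas.comp (hXm n)).pow_const 2))
      (fun ω => hg1b (X n ω))
  have Igk : ∀ (k : Fin K) n, Integrable (fun ω => Kf j (X n ω) * f k (X n ω)) P := fun k n =>
    integrable_bdd_comp P (((hKf_meas j).comp (hXm n)).mul ((hf_meas k).comp (hXm n)))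
      (fun ω => hgkb k (X n ω))
  -- per-step expansion
  have key : ∀ n, ∫ ω, Kf j (X n ω) * (ΔX n ω) ^ 2 ∂P
      = Δt ^ 2 * ∫ ω, Kf j (X n ω) * b (X n ω) ^ 2 ∂P
        + Δt * ∑ k, d k * ∫ ω, Kf j (X n ω) * f k (X n ω) ∂P := by
    intro n
    have hexp : ∀ ω, Kf j (X n ω) * (ΔX n ω) ^ 2
        = Δt ^ 2 * (Kf j (X n ω) * b (X n ω) ^ 2)
          + (2 * Δt * Real.sqrt Δt) * ((Kf j (X n ω) * (b (X n ω) * σ (X n ω))) * ξ n ω)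
          + Δt * ((Kf j (X n ω) * σ (X n ω) ^ 2) * (ξ n ω) ^ 2) := by
      intro ω
      rw [hΔX]
      linear_combination (Kf j (X n ω) * σ (X n ω) ^ 2 * ξ n ω ^ 2) *
        (Real.sq_sqrt hΔt.le)
    have I2 : Integrable (fun ω => (Kf j (X n ω) * (b (X n ω) * σ (X n ω))) * ξ n ω) P := by
      have := (hξ_int n).bdd_mul
        ((((hKf_meas j).comp (hXm n)).mul
          ((hb_meas.comp (hXm n)).mul (hσ_meas.comp (hXm n)))).aestronglyMeasurable)
        (Filter.Eventually.of_forall fun ω => by rw [Real.norm_eq_abs]; exact hg2b (X n ω))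
      exact this
    have I3 : Integrable (fun ω => (Kf j (X n ω) * σ (X n ω) ^ 2) * (ξ n ω) ^ 2) P := by
      have := (hξ_sq_int n).bdd_mul
        ((((hKf_meas j).comp (hXm n)).mul
          ((hσ_meas.comp (hXm n)).pow_const 2)).aestronglyMeasurable)
        (Filter.Eventually.of_forall fun ω => by rw [Real.norm_eq_abs]; exact hg3b (X n ω))
      exact this
    simp only [hexp]
    have Ia : Integrable (fun ω => Δt ^ 2 * (Kf j (X n ω) * b (X n ω) ^ 2)) P :=
      (Ig1 n).const_mul (Δt ^ 2)
    have Ib : Integrable (fun ω =>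
        2 * Δt * Real.sqrt Δt * (Kf j (X n ω) * (b (X n ω) * σ (X n ω)) * ξ n ω)) P :=
      I2.const_mul (2 * Δt * Real.sqrt Δt)
    have Ic : Integrable (fun ω => Δt * (Kf j (X n ω) * σ (X n ω) ^ 2 * ξ n ω ^ 2)) P :=
      I3.const_mul Δt
    have Iab : Integrable (fun ω => Δt ^ 2 * (Kf j (X n ω) * b (X n ω) ^ 2)
        + 2 * Δt * Real.sqrt Δt * (Kf j (X n ω) * (b (X n ω) * σ (X n ω)) * ξ n ω)) P :=
      Ia.add Ib
    rw [integral_add Iab Ic, integral_add Ia Ib,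
      integral_const_mul, integral_const_mul, integral_const_mul,
      hmul n (fun x => Kf j x * (b x * σ x)) (CK * (Cb * Cσ)) (((hKf_meas j)).mul (hb_meas.mul hσ_meas)) hg2b
        (fun x => x) measurable_id (hξ_int n),
      hmul n (fun x => Kf j x * σ x ^ 2) (CK * Cσ ^ 2) (((hKf_meas j)).mul (hσ_meas.pow_const 2)) hg3b
        (fun x => x ^ 2) (by fun_prop) (hξ_sq_int n),
      hξ_mean n, hξ_sq_mean n, mul_zero, mul_zero, add_zero, mul_one]
    congr 1
    -- ∫ Kf σ² = ∑ k d k ∫ Kf f k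
    have hpt : ∀ ω, Kf j (X n ω) * σ (X n ω) ^ 2
        = ∑ k, d k * (Kf j (X n ω) * f k (X n ω)) := by
      intro ω
      rw [hlib, Finset.mul_sum]
      exact Finset.sum_congr rfl fun k _ => by ring
    simp only [hpt]
    rw [integral_finset_sum _ (fun k _ => ((Igk k n).const_mul _))]
    congr 1
    exact Finset.sum_congr rfl fun k _ => integral_const_mul _ _
  -- assemble
  have Ilhs : ∀ n ∈ Finset.range N, Integrable (fun ω => Kf j (X n ω) * (ΔX n ω) ^ 2) P := by
    intro n _
    have hmeasΔX : Measurable (ΔX n) := by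
      have : ΔX n = fun ω => b (X n ω) * Δt + σ (X n ω) * Real.sqrt Δt * ξ n ω :=
        funext (hΔX n)
      rw [this]
      exact (((hb_meas.comp (hXm n)).mul_const Δt).add
        (((hσ_meas.comp (hXm n)).mul_const (Real.sqrt Δt)).mul (hξ_meas n)))
    have hexp : (fun ω => Kf j (X n ω) * (ΔX n ω) ^ 2)
        = fun ω => Δt ^ 2 * (Kf j (X n ω) * b (X n ω) ^ 2)
          + (2 * Δt * Real.sqrt Δt) * ((Kf j (X n ω) * (b (X n ω) * σ (X n ω))) * ξ n ω)
          + Δt * ((Kf j (X n ω) * σ (X n ω) ^ 2) * (ξ n ω) ^ 2) := by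
      funext ω
      rw [hΔX]
      linear_combination (Kf j (X n ω) * σ (X n ω) ^ 2 * ξ n ω ^ 2) *
        (Real.sq_sqrt hΔt.le)
    rw [hexp]
    have I2 : Integrable (fun ω => (Kf j (X n ω) * (b (X n ω) * σ (X n ω))) * ξ n ω) P :=
      (hξ_int n).bdd_mul
        ((((hKf_meas j).comp (hXm n)).mul
          ((hb_meas.comp (hXm n)).mul (hσ_meas.comp (hXm n)))).aestronglyMeasurable)
        (Filter.Eventually.of_forall fun ω => by rw [Real.norm_eq_abs]; exact hg2b (X n ω))
    have I3 : Integrable (fun ω => (Kf j (X n ω) * σ (X n ω) ^ 2) * (ξ n ω) ^ 2) P :=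
      (hξ_sq_int n).bdd_mul
        ((((hKf_meas j).comp (hXm n)).mul
          ((hσ_meas.comp (hXm n)).pow_const 2)).aestronglyMeasurable)
        (Filter.Eventually.of_forall fun ω => by rw [Real.norm_eq_abs]; exact hg3b (X n ω))
    exact (((Ig1 n).const_mul _).add (I2.const_mul _)).add (I3.const_mul _)
  rw [integral_finset_sum _ Ilhs]
  have hrhs : ∀ k : Fin K, ∫ ω, (Δt * ∑ n ∈ Finset.range N, Kf j (X n ω) * f k (X n ω)) ∂P
      = Δt * ∑ n ∈ Finset.range N, ∫ ω, Kf j (X n ω) * f k (X n ω) ∂P := by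
    intro k
    rw [integral_const_mul, integral_finset_sum _ (fun n _ => Igk k n)]
  simp only [key, hrhs]
  rw [Finset.sum_add_distrib, ← Finset.mul_sum, ← Finset.mul_sum, add_comm]
  congr 1
  rw [Finset.sum_comm, Finset.mul_sum]
  refine Finset.sum_congr rfl fun k _ => ?_
  rw [← Finset.mul_sum]
  ring
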